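/- arXiv:1705.06312 — 3 statements merged into one kernel-verified Lean document; each statement's English description precedes it below -/
import Mathlib

section
/- Every propositional tautology, with propositional variables substituted by matching logic patterns of a common sort s, is a valid matching logic pattern: its evaluation under any valuation in any model is the full carrier M_s. -/
namespace ML

structure Signature where
  S : Type
  Sym : Type
  n : Sym → ℕ
  arg : (f : Sym) → Fin (n f) → S
  res : Sym → S

inductive Pattern (σ : Signature) : σ.S → Type
  | var (s : σ.S) (x : ℕ) : Pattern σ s
  | app (f : σ.Sym) (args : ∀ i : Fin (σ.n f), Pattern σ (σ.arg f i)) : Pattern σ (σ.res f)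
  | neg {s : σ.S} (φ : Pattern σ s) : Pattern σ s
  | and {s : σ.S} (φ ψ : Pattern σ s) : Pattern σ s
  | ex {s : σ.S} (s' : σ.S) (x : ℕ) (φ : Pattern σ s) : Pattern σ s

namespace Pattern

variable {σ : Signature}

def or {s : σ.S} (φ ψ : Pattern σ s) : Pattern σ s := .neg (.and (.neg φ) (.neg ψ))

def imp {s : σ.S} (φ ψ : Pattern σ s) : Pattern σ s := .or (.neg φ) ψ

def piff {s : σ.S} (φ ψ : Pattern σ s) : Pattern σ s := .and (.imp φ ψ) (.imp ψ φ)

def all {s : σ.S} (s' : σ.S) (x : ℕ) (φ : Pattern σ s) : Pattern σ s :=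
  .neg (.ex s' x (.neg φ))

end Pattern

/-- Free variables of a pattern, as sort-variable pairs. -/
def FV {σ : Signature} : {s : σ.S} → Pattern σ s → Set ((s : σ.S) × ℕ)
  | _, .var s x => {⟨s, x⟩}
  | _, .app _ args => ⋃ i, FV (args i)
  | _, .neg φ => FV φ
  | _, .and φ ψ => FV φ ∪ FV ψ
  | _, .ex s' x φ => FV φ \ {⟨s', x⟩}

structure Model (σ : Signature) where
  carrier : σ.S → Type
  nonempty : ∀ s, Nonempty (carrier s)
  interp : (f : σ.Sym) → (∀ i : Fin (σ.n f), carrier (σ.arg f i)) → Set (carrier (σ.res f))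

def Val {σ : Signature} (M : Model σ) := (s : σ.S) → ℕ → M.carrier s

open Classical in
noncomputable def Val.upd {σ : Signature} {M : Model σ} (ρ : Val M) (s : σ.S) (x : ℕ)
    (a : M.carrier s) : Val M :=
  fun s' y => if h : s' = s ∧ y = x then cast (congrArg M.carrier h.1).symm a else ρ s' y

/-- Pattern evaluation: the set of elements matching the pattern. -/
noncomputable def eval {σ : Signature} {M : Model σ} :
    {s : σ.S} → Pattern σ s → Val M → Set (M.carrier s)
  | _, .var s x, ρ => {ρ s x}
  | _, .app f args, ρ =>
      { b | ∃ a : ∀ i, M.carrier (σ.arg f i), (∀ i, a i ∈ eval (args i) ρ) ∧ b ∈ M.interp f a }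
  | _, .neg φ, ρ => (eval φ ρ)ᶜ
  | _, .and φ ψ, ρ => eval φ ρ ∩ eval ψ ρ
  | _, .ex s' x φ, ρ => ⋃ a : M.carrier s', eval φ (ρ.upd s' x a)

def Sat {σ : Signature} (M : Model σ) {s : σ.S} (φ : Pattern σ s) : Prop :=
  ∀ ρ : Val M, eval φ ρ = Set.univ

def Valid {σ : Signature} {s : σ.S} (φ : Pattern σ s) : Prop :=
  ∀ M : Model σ, Sat M φ

end ML

namespace ML

inductive PropForm (V : Type) : Type
  | var (v : V)
  | neg (p : PropForm V)
  | and (p q : PropForm V)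

def PropForm.evalb {V : Type} : PropForm V → (V → Bool) → Bool
  | .var v, θ => θ v
  | .neg p, θ => !(p.evalb θ)
  | .and p q, θ => p.evalb θ && q.evalb θ

/-- A propositional tautology: true under every two-valued valuation. -/
def PropForm.Tautology {V : Type} (p : PropForm V) : Prop :=
  ∀ θ : V → Bool, p.evalb θ = true

/-- Substitute patterns of sort `s` for the propositional variables. -/
def PropForm.substP {V : Type} {σ : Signature} {s : σ.S} :
    PropForm V → (V → Pattern σ s) → Pattern σ s
  | .var v, u => u v
  | .neg p, u => .neg (p.substP u)
  | .and p q, u => .and (p.substP u) (q.substP u)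

end ML

/-! Evaluation of a substituted formula is its interpretation in the powerset algebra of the
carrier, and there a tautology holds pointwise: whether `b` belongs to the interpretation is
decided by the Boolean valuation `v ↦ (b ∈ A v)`. -/

namespace ML

namespace PropForm

variable {V : Type}

def interp {β : Type*} [BooleanAlgebra β] : PropForm V → (V → β) → β
  | .var v, A => A v
  | .neg p, A => (p.interp A)ᶜ
  | .and p q, A => p.interp A ⊓ q.interp A

open Classical in
theorem mem_interp_iff {α : Type*} (p : PropForm V) (A : V → Set α) (b : α) :
    b ∈ p.interp A ↔ p.evalb (fun v => decide (b ∈ A v)) = true := by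
  induction p with
  | var v => simp [interp, evalb]
  | neg q ih => simp [interp, evalb, ih]
  | and q r ihq ihr => simp [interp, evalb, ihq, ihr]

theorem Tautology.interp_eq_univ {α : Type*} {p : PropForm V} (hp : p.Tautology)
    (A : V → Set α) : p.interp A = Set.univ :=
  Set.eq_univ_of_forall fun b => (mem_interp_iff p A b).mpr (hp _)

theorem eval_substP {σ : Signature} {s : σ.S} {M : Model σ} (p : PropForm V)
    (u : V → Pattern σ s) (ρ : Val M) :
    eval (p.substP u) ρ = p.interp fun v => eval (u v) ρ := by
  induction p with
  | var v => rfl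
  | neg q ih => simp only [substP, interp, eval, ih]
  | and q r ihq ihr => simp only [substP, interp, eval, ihq, ihr]; rfl

end PropForm

end ML

/-- every propositional tautology instantiated with patterns of a
common sort is a valid matching logic pattern. -/
theorem stmt3 {V : Type} {σ : ML.Signature} {s : σ.S} (p : ML.PropForm V)
    (hp : p.Tautology) (u : V → ML.Pattern σ s) : ML.Valid (p.substP u) := by
  intro M ρ
  rw [ML.PropForm.eval_substP]
  exact hp.interp_eq_univ _
end

section
/- Symbol application commutes with existential quantification: ⊨ C[∃x.φᵢ] ↔ ∃x.C[φᵢ] when x does not occur free in the context C[□] = σ(φ₁,...,φ_{i-1},□,φ_{i+1},...,φₙ). -/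
namespace ML

variable {σ : Signature}

/-- The argument sort of a unary (definedness) symbol. -/
def arg1 (d : σ.Sym) (hn : σ.n d = 1) : σ.S := σ.arg d ⟨0, by omega⟩

/-- Definedness applied to a pattern: `⌈φ⌉`. -/
noncomputable def ceil (d : σ.Sym) (hn : σ.n d = 1) (φ : Pattern σ (arg1 d hn)) :
    Pattern σ (σ.res d) :=
  .app d (fun j => cast (by
    have hj : j = (⟨0, by omega⟩ : Fin (σ.n d)) := Fin.ext (by have := j.isLt; omega)
    rw [hj]; rfl) φ)

/-- The definedness axiom pattern `⌈x⌉`. -/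
noncomputable def defAx (d : σ.Sym) (hn : σ.n d = 1) : Pattern σ (σ.res d) :=
  ceil d hn (.var (arg1 d hn) 0)

/-- Totality `⌊φ⌋ ≡ ¬⌈¬φ⌉`. -/
noncomputable def floor (d : σ.Sym) (hn : σ.n d = 1) (φ : Pattern σ (arg1 d hn)) :
    Pattern σ (σ.res d) :=
  .neg (ceil d hn (.neg φ))

/-- Equality pattern `φ = φ' ≡ ⌊φ ↔ φ'⌋`. -/
noncomputable def eqP (d : σ.Sym) (hn : σ.n d = 1) (φ φ' : Pattern σ (arg1 d hn)) :
    Pattern σ (σ.res d) :=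
  floor d hn (φ.piff φ')

/-- Membership pattern `x ∈ φ ≡ ⌈x ∧ φ⌉`. -/
noncomputable def mem (d : σ.Sym) (hn : σ.n d = 1) (x : ℕ) (φ : Pattern σ (arg1 d hn)) :
    Pattern σ (σ.res d) :=
  ceil d hn ((Pattern.var (arg1 d hn) x).and φ)

/-- The context `σ(φ₁,…,□,…,φₙ)` with `ψ` plugged into the `i`-th position. -/
def plug (f : σ.Sym) (i : Fin (σ.n f)) (args : ∀ j : Fin (σ.n f), Pattern σ (σ.arg f j))
    (ψ : Pattern σ (σ.arg f i)) : Pattern σ (σ.res f) :=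
  .app f (fun j => if h : j = i then cast (by rw [h]) ψ else args j)

/-- Bound variables of a pattern. -/
def BV : {s : σ.S} → Pattern σ s → Set ((s : σ.S) × ℕ)
  | _, .var _ _ => ∅
  | _, .app _ args => ⋃ i, BV (args i)
  | _, .neg φ => BV φ
  | _, .and φ ψ => BV φ ∪ BV ψ
  | _, .ex s' x φ => BV φ ∪ {⟨s', x⟩}

open Classical in
/-- Substitution `φ[ψ/x]` of pattern `ψ` for variable `x` of sort `t` (capture-free
provided the bound variables of `φ` are disjoint from the free variables of `ψ`). -/
noncomputable def subst : {s : σ.S} → Pattern σ s → (t : σ.S) → ℕ → Pattern σ t → Pattern σ s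
  | _, .var s' y, t, x, ψ =>
      if h : s' = t ∧ y = x then cast (by rw [h.1]) ψ else .var s' y
  | _, .app f args, t, x, ψ => .app f (fun i => subst (args i) t x ψ)
  | _, .neg φ, t, x, ψ => .neg (subst φ t x ψ)
  | _, .and φ₁ φ₂, t, x, ψ => .and (subst φ₁ t x ψ) (subst φ₂ t x ψ)
  | _, .ex s' y φ, t, x, ψ =>
      if s' = t ∧ y = x then .ex s' y φ else .ex s' y (subst φ t x ψ)

/-- Semantic entailment from a set of axiom patterns. -/
def Entails (F : Set ((s : σ.S) × Pattern σ s)) {s : σ.S} (φ : Pattern σ s) : Prop :=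
  ∀ M : Model σ, (∀ ψ ∈ F, Sat M ψ.2) → Sat M φ

/-- A pattern is functional in `M` iff it evaluates to a singleton under every valuation. -/
def Functional (M : Model σ) {s : σ.S} (φ : Pattern σ s) : Prop :=
  ∀ ρ : Val M, ∃ a : M.carrier s, eval φ ρ = {a}

end ML

/-!
On sets of arguments, `f` acts by the pointwise extension of `M.interp f`, which commutes
with unions in each argument separately. The semantics of `∃x.φ` is such a union over the
values of `x`, and since `x` is not free in the other arguments, their evaluations do not
depend on the value chosen for `x`.
-/

namespace ML

variable {σ : Signature} {M : Model σ}

def Model.interpSet (M : Model σ) (f : σ.Sym) (S : ∀ j : Fin (σ.n f), Set (M.carrier (σ.arg f j))) :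
    Set (M.carrier (σ.res f)) :=
  { b | ∃ a : ∀ j, M.carrier (σ.arg f j), (∀ j, a j ∈ S j) ∧ b ∈ M.interp f a }

theorem Model.interpSet_update_iUnion {ι : Type*} (f : σ.Sym) (i : Fin (σ.n f))
    (S : ∀ j : Fin (σ.n f), Set (M.carrier (σ.arg f j))) (T : ι → Set (M.carrier (σ.arg f i))) :
    M.interpSet f (Function.update S i (⋃ c, T c)) =
      ⋃ c, M.interpSet f (Function.update S i (T c)) := by
  have mem_update : ∀ (a : ∀ j, M.carrier (σ.arg f j)) (U : Set (M.carrier (σ.arg f i))),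
      (∀ j, a j ∈ Function.update S i U j) ↔ a i ∈ U ∧ ∀ j ≠ i, a j ∈ S j :=
    fun a _ => Function.forall_update_iff S (p := fun j s => a j ∈ s)
  ext b
  simp only [interpSet, Set.mem_iUnion]
  constructor
  · rintro ⟨a, ha, hb⟩
    obtain ⟨hc, hS⟩ := (mem_update a _).1 ha
    obtain ⟨c, hc⟩ := Set.mem_iUnion.1 hc
    exact ⟨c, a, (mem_update a _).2 ⟨hc, hS⟩, hb⟩
  · rintro ⟨c, a, ha, hb⟩
    obtain ⟨hc, hS⟩ := (mem_update a _).1 ha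
    exact ⟨a, (mem_update a _).2 ⟨Set.mem_iUnion.2 ⟨c, hc⟩, hS⟩, hb⟩

theorem Val.upd_self (ρ : Val M) (s : σ.S) (x : ℕ) (a : M.carrier s) :
    ρ.upd s x a s x = a := by
  simp [Val.upd]

theorem Val.upd_of_ne (ρ : Val M) {s t : σ.S} {x y : ℕ} (a : M.carrier s)
    (h : (⟨t, y⟩ : Σ _ : σ.S, ℕ) ≠ ⟨s, x⟩) : ρ.upd s x a t y = ρ t y := by
  refine dif_neg ?_
  rintro ⟨rfl, rfl⟩
  exact h rfl

theorem eval_app (f : σ.Sym) (args : ∀ j : Fin (σ.n f), Pattern σ (σ.arg f j)) (ρ : Val M) :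
    eval (.app f args) ρ = M.interpSet f (fun j => eval (args j) ρ) :=
  rfl

theorem eval_congr :
    ∀ {s : σ.S} (φ : Pattern σ s) (ρ ρ' : Val M),
      (∀ p ∈ FV φ, ρ p.1 p.2 = ρ' p.1 p.2) → eval φ ρ = eval φ ρ'
  | _, .var s x, ρ, ρ', h => by
      rw [eval, eval, h ⟨s, x⟩ rfl]
  | _, .app f args, ρ, ρ', h => by
      simp only [eval_app]
      congr 1
      exact funext fun j => eval_congr (args j) ρ ρ' fun p hp => h p (Set.mem_iUnion.2 ⟨j, hp⟩)
  | _, .neg φ, ρ, ρ', h => by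
      rw [eval, eval, eval_congr φ ρ ρ' h]
  | _, .and φ ψ, ρ, ρ', h => by
      rw [eval, eval, eval_congr φ ρ ρ' fun p hp => h p (Or.inl hp),
        eval_congr ψ ρ ρ' fun p hp => h p (Or.inr hp)]
  | _, .ex s' x φ, ρ, ρ', h => by
      refine Set.iUnion_congr fun a => eval_congr φ _ _ fun p hp => ?_
      by_cases hp' : p = ⟨s', x⟩
      · subst hp'
        rw [Val.upd_self, Val.upd_self]
      · rw [Val.upd_of_ne _ _ hp', Val.upd_of_ne _ _ hp']
        exact h p ⟨hp, hp'⟩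

theorem eval_upd_of_notMem_FV {s : σ.S} (φ : Pattern σ s) (ρ : Val M) {t : σ.S} {x : ℕ}
    (a : M.carrier t) (hx : ⟨t, x⟩ ∉ FV φ) : eval φ (ρ.upd t x a) = eval φ ρ :=
  eval_congr φ _ _ fun _ hp => Val.upd_of_ne ρ a fun hpx => hx (hpx ▸ hp)

theorem plug_eq_app_update (f : σ.Sym) (i : Fin (σ.n f))
    (args : ∀ j : Fin (σ.n f), Pattern σ (σ.arg f j)) (ψ : Pattern σ (σ.arg f i)) :
    plug f i args ψ = .app f (Function.update args i ψ) := by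
  refine congrArg _ (funext fun j => ?_)
  by_cases hj : j = i
  · subst hj
    simp
  · simp [hj]

theorem eval_plug (f : σ.Sym) (i : Fin (σ.n f))
    (args : ∀ j : Fin (σ.n f), Pattern σ (σ.arg f j)) (ψ : Pattern σ (σ.arg f i)) (ρ : Val M) :
    eval (plug f i args ψ) ρ =
      M.interpSet f (Function.update (fun j => eval (args j) ρ) i (eval ψ ρ)) := by
  rw [plug_eq_app_update, eval_app]
  congr 1
  exact funext fun j => Function.apply_update (fun j (φ : Pattern σ (σ.arg f j)) => eval φ ρ) _ _ _ j

theorem eval_plug_ex (f : σ.Sym) (i : Fin (σ.n f))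
    (args : ∀ j : Fin (σ.n f), Pattern σ (σ.arg f j)) (sx : σ.S) (x : ℕ)
    (φ : Pattern σ (σ.arg f i)) (hx : ∀ j ≠ i, (⟨sx, x⟩ : Σ _ : σ.S, ℕ) ∉ FV (args j))
    (ρ : Val M) :
    eval (plug f i args (.ex sx x φ)) ρ = eval (.ex sx x (plug f i args φ)) ρ := by
  rw [eval_plug, eval, Model.interpSet_update_iUnion]
  refine Set.iUnion_congr fun c => ?_
  rw [eval_plug]
  congr 1
  refine funext fun j => ?_
  by_cases hj : j = i
  · subst hj
    simp
  · simp [hj, eval_upd_of_notMem_FV _ _ _ (hx j hj)]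

theorem eval_piff_eq_univ {s : σ.S} {φ ψ : Pattern σ s} {ρ : Val M} (h : eval φ ρ = eval ψ ρ) :
    eval (φ.piff ψ) ρ = Set.univ := by
  simp only [Pattern.piff, Pattern.imp, Pattern.or, eval, h, compl_compl, Set.inter_compl_self,
    Set.compl_empty, Set.inter_self]

end ML

/-- symbol application commutes with existential quantification:
`⊨ C[∃x.φ] ↔ ∃x.C[φ]` when `x` does not occur free in the context. -/
theorem stmt8 {σ : ML.Signature} (f : σ.Sym) (i : Fin (σ.n f))
    (args : ∀ j : Fin (σ.n f), ML.Pattern σ (σ.arg f j))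
    (sx : σ.S) (x : ℕ) (φ : ML.Pattern σ (σ.arg f i))
    (hx : ∀ j, j ≠ i → (⟨sx, x⟩ : (t : σ.S) × ℕ) ∉ ML.FV (args j)) :
    ML.Valid ((ML.plug f i args (ML.Pattern.ex sx x φ)).piff
      (ML.Pattern.ex sx x (ML.plug f i args φ))) ∧
    ∀ (M : ML.Model σ) (ρ : ML.Val M),
      ML.eval (ML.plug f i args (ML.Pattern.ex sx x φ)) ρ =
        ML.eval (ML.Pattern.ex sx x (ML.plug f i args φ)) ρ :=
  ⟨fun _ ρ => ML.eval_piff_eq_univ (ML.eval_plug_ex f i args sx x φ hx ρ),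
    fun _ => ML.eval_plug_ex f i args sx x φ hx⟩
end

section
/- Constraint propagation: for a context C[□] = σ(φ₁,...,φ_{i-1},□,φ_{i+1},...,φₙ) and any pattern φ, ⊨ C[φᵢ ∧ ⌈φ⌉] = C[φᵢ] ∧ ⌈φ⌉, i.e., definedness constraints can be moved through symbol applications. -/
namespace ML

variable {σ : Signature} {M : Model σ}

theorem eq_mk_zero_of_n_eq_one {d : σ.Sym} (hn : σ.n d = 1) (j : Fin (σ.n d)) :
    j = ⟨0, by omega⟩ :=
  Fin.ext (by have := j.isLt; omega)

theorem eval_cast_of_eq_setOf {s t : σ.S} (h : s = t) (hp : Pattern σ s = Pattern σ t)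
    (φ : Pattern σ s) (ρ : Val M) {P : Prop} (hφ : eval φ ρ = {_b | P}) :
    eval (cast hp φ) ρ = {_b | P} := by
  subst h
  exact hφ

theorem eval_cast_nonempty_iff {s t : σ.S} (h : s = t) (hp : Pattern σ s = Pattern σ t)
    (φ : Pattern σ s) (ρ : Val M) :
    (eval (cast hp φ) ρ).Nonempty ↔ (eval φ ρ).Nonempty := by
  subst h
  rfl

theorem interp_eq_univ_of_sat_defAx {d : σ.Sym} {hn : σ.n d = 1} (hd : Sat M (defAx d hn))
    (a : ∀ j, M.carrier (σ.arg d j)) : M.interp d a = Set.univ := by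
  refine Set.eq_univ_of_forall fun b => ?_
  let ρ : Val M := Val.upd (fun s _ => Classical.choice (M.nonempty s)) _ 0 (a ⟨0, by omega⟩)
  obtain ⟨a', ha', hb⟩ : b ∈ eval (defAx d hn) ρ := by rw [hd ρ]; trivial
  suffices a' = a from this ▸ hb
  funext j
  obtain rfl := eq_mk_zero_of_n_eq_one hn j
  have h0 : a' _ ∈ eval (Pattern.var (arg1 d hn) 0) ρ := ha' _
  simp only [eval, ρ, Val.upd, arg1, and_self, dite_true, cast_eq] at h0
  exact h0

theorem eval_ceil_of_sat_defAx {d : σ.Sym} {hn : σ.n d = 1} (hd : Sat M (defAx d hn))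
    (ψ : Pattern σ (arg1 d hn)) (ρ : Val M) :
    eval (ceil d hn ψ) ρ = {_b | (eval ψ ρ).Nonempty} := by
  ext b
  simp only [ceil, eval, interp_eq_univ_of_sat_defAx hd, Set.mem_univ, and_true,
    Set.mem_ofPred_eq]
  constructor
  · rintro ⟨a, ha⟩
    exact ⟨_, ha ⟨0, by omega⟩⟩
  · rintro ⟨c, hc⟩
    refine ⟨fun j => (eq_mk_zero_of_n_eq_one hn j).symm ▸ c, fun j => ?_⟩
    obtain rfl := eq_mk_zero_of_n_eq_one hn j
    exact hc

theorem mem_eval_plug (f : σ.Sym) (i : Fin (σ.n f))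
    (args : ∀ j : Fin (σ.n f), Pattern σ (σ.arg f j)) (ψ : Pattern σ (σ.arg f i))
    (ρ : Val M) (b : M.carrier (σ.res f)) :
    b ∈ eval (plug f i args ψ) ρ ↔
      ∃ a : ∀ j, M.carrier (σ.arg f j),
        (a i ∈ eval ψ ρ ∧ ∀ j ≠ i, a j ∈ eval (args j) ρ) ∧ b ∈ M.interp f a := by
  refine exists_congr fun a => and_congr_left fun _ =>
    ⟨fun h => ⟨?_, fun j hj => ?_⟩, fun h j => ?_⟩
  · simpa using h i
  · simpa [hj] using h j
  · by_cases hj : j = i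
    · subst hj
      simpa using h.1
    · simpa [hj] using h.2 j hj

theorem eval_plug_and_of_eq_setOf (f : σ.Sym) (i : Fin (σ.n f))
    (args : ∀ j : Fin (σ.n f), Pattern σ (σ.arg f j)) (φi ψ : Pattern σ (σ.arg f i))
    (ρ : Val M) {P : Prop} (hψ : eval ψ ρ = {_b | P}) :
    eval (plug f i args (φi.and ψ)) ρ = eval (plug f i args φi) ρ ∩ {_b | P} := by
  ext b
  simp only [mem_eval_plug, eval, hψ, Set.mem_inter_iff, Set.mem_ofPred_eq]
  by_cases hP : P <;> simp [hP]

end ML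

/-- Constraint propagation: `⊨ C[φᵢ ∧ ⌈φ⌉] = C[φᵢ] ∧ ⌈φ⌉`:
both sides evaluate equally under every valuation, in every model satisfying the
definedness axioms (`din` produces the inner sort `sᵢ`, `dout` the outer sort `s`,
both applied to the same argument sort). -/
theorem stmt15 {σ : ML.Signature} (f : σ.Sym) (i : Fin (σ.n f))
    (args : ∀ j : Fin (σ.n f), ML.Pattern σ (σ.arg f j))
    (din dout : σ.Sym) (hin : σ.n din = 1) (hout : σ.n dout = 1)
    (hri : σ.res din = σ.arg f i) (hro : σ.res dout = σ.res f)
    (hargs : ML.arg1 dout hout = ML.arg1 din hin)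
    (φi : ML.Pattern σ (σ.arg f i)) (φ : ML.Pattern σ (ML.arg1 din hin)) :
    ∀ M : ML.Model σ, ML.Sat M (ML.defAx din hin) → ML.Sat M (ML.defAx dout hout) →
    ∀ ρ : ML.Val M,
      ML.eval (ML.plug f i args (φi.and (cast (by rw [hri]) (ML.ceil din hin φ)))) ρ =
        ML.eval ((ML.plug f i args φi).and
          (cast (by rw [hro]) (ML.ceil dout hout (cast (by rw [hargs]) φ)))) ρ := by
  intro M hdin hdout ρ
  have hceil_in := ML.eval_ceil_of_sat_defAx hdin φ ρ
  have hceil_out := ML.eval_ceil_of_sat_defAx hdout (cast (by rw [hargs]) φ) ρ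
  rw [ML.eval_cast_nonempty_iff hargs.symm] at hceil_out
  rw [ML.eval_plug_and_of_eq_setOf f i args φi _ ρ (ML.eval_cast_of_eq_setOf hri _ _ ρ hceil_in)]
  exact congrArg _ (ML.eval_cast_of_eq_setOf hro _ _ ρ hceil_out).symm
end
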